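/- arXiv:2512.19019 — 8 statements merged into one kernel-verified Lean document; each statement's English description precedes it below -/
import Mathlib

section
/- Let K₁ and K₂ be randomized mechanisms, modeled as functions assigning to each dataset D a probability measure K₁(D) on a measurable space Ω₁ and K₂(D) on a measurable space Ω₂. If K₁ satisfies ε₁-differential privacy and K₂ satisfies ε₂-differential privacy with respect to the same adjacency relation on datasets, then the sequential composition D ↦ K₁(D) ⊗ K₂(D) (the product measure, i.e., running both mechanisms with independent randomness) satisfies (ε₁ + ε₂)-differential privacy: for all adjacent datasets D, D' and every measurable set S ⊆ Ω₁ × Ω₂, (K₁(D) ⊗ K₂(D))(S) ≤ e^{ε₁+ε₂} · (K₁(D') ⊗ K₂(D'))(S). -/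
open MeasureTheory

namespace MeasureTheory.Measure

variable {α β : Type*} [MeasurableSpace α] [MeasurableSpace β]

theorem prod_le_smul_prod {μ μ' : Measure α} {ν ν' : Measure β} [SFinite ν'] {a b : ENNReal}
    (hμ : μ ≤ a • μ') (hν : ν ≤ b • ν') : μ.prod ν ≤ (a * b) • μ'.prod ν' :=
  calc μ.prod ν ≤ (a • μ').prod (b • ν') := prod_mono hμ hν
    _ = (a * b) • μ'.prod ν' := by rw [prod_smul_left, prod_smul_right, smul_smul]

end MeasureTheory.Measure

theorem dp_sequential_composition_general
    {Data : Type*} {Ω₁ Ω₂ : Type*} [MeasurableSpace Ω₁] [MeasurableSpace Ω₂]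
    (adj : Data → Data → Prop)
    (K₁ : Data → Measure Ω₁) (K₂ : Data → Measure Ω₂)
    [∀ d, IsProbabilityMeasure (K₂ d)]
    (ε₁ ε₂ : ℝ)
    (h₁ : ∀ D D', adj D D' → ∀ S : Set Ω₁, MeasurableSet S →
      K₁ D S ≤ ENNReal.ofReal (Real.exp ε₁) * K₁ D' S)
    (h₂ : ∀ D D', adj D D' → ∀ S : Set Ω₂, MeasurableSet S →
      K₂ D S ≤ ENNReal.ofReal (Real.exp ε₂) * K₂ D' S) :
    ∀ D D', adj D D' → ∀ S : Set (Ω₁ × Ω₂), MeasurableSet S →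
      ((K₁ D).prod (K₂ D)) S ≤ ENNReal.ofReal (Real.exp (ε₁ + ε₂)) * ((K₁ D').prod (K₂ D')) S := by
  intro D D' hadj S _
  have hprod := Measure.prod_le_smul_prod
    (Measure.le_iff.2 (h₁ D D' hadj)) (Measure.le_iff.2 (h₂ D D' hadj))
  rw [Real.exp_add, ENNReal.ofReal_mul (Real.exp_pos ε₁).le]
  exact hprod S

/-- **Sequential composition of differential privacy.**
If `K₁` is `ε₁`-differentially private and `K₂` is `ε₂`-differentially private with respect to
the same adjacency relation, then the sequential composition `D ↦ K₁(D) ⊗ K₂(D)` (product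
measure, i.e. independent randomness) is `(ε₁ + ε₂)`-differentially private. -/
theorem dp_sequential_composition
    {Data : Type*} {Ω₁ Ω₂ : Type*} [MeasurableSpace Ω₁] [MeasurableSpace Ω₂]
    (adj : Data → Data → Prop)
    (K₁ : Data → Measure Ω₁) (K₂ : Data → Measure Ω₂)
    [∀ d, IsProbabilityMeasure (K₁ d)] [∀ d, IsProbabilityMeasure (K₂ d)]
    (ε₁ ε₂ : ℝ)
    (h₁ : ∀ D D', adj D D' → ∀ S : Set Ω₁, MeasurableSet S →
      K₁ D S ≤ ENNReal.ofReal (Real.exp ε₁) * K₁ D' S)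
    (h₂ : ∀ D D', adj D D' → ∀ S : Set Ω₂, MeasurableSet S →
      K₂ D S ≤ ENNReal.ofReal (Real.exp ε₂) * K₂ D' S) :
    ∀ D D', adj D D' → ∀ S : Set (Ω₁ × Ω₂), MeasurableSet S →
      ((K₁ D).prod (K₂ D)) S ≤ ENNReal.ofReal (Real.exp (ε₁ + ε₂)) * ((K₁ D').prod (K₂ D')) S :=
  dp_sequential_composition_general adj K₁ K₂ ε₁ ε₂ h₁ h₂
end

section
/- Let α > 1 and let P₁, Q₁ be probability measures on a measurable space Ω₁ and P₂, Q₂ probability measures on a measurable space Ω₂ with D_α(P₁‖Q₁) ≤ ε₁ and D_α(P₂‖Q₂) ≤ ε₂. Then the product measures satisfy D_α(P₁ ⊗ P₂ ‖ Q₁ ⊗ Q₂) ≤ ε₁ + ε₂. Consequently, if mechanisms M₁ and M₂ satisfy (α, ε₁)-RDP and (α, ε₂)-RDP respectively, their sequential composition D ↦ M₁(D) ⊗ M₂(D) satisfies (α, ε₁ + ε₂)-RDP. -/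
open MeasureTheory Classical

/-- The Rényi divergence of order `α` between measures `P` and `Q`:
`D_α(P‖Q) = (1/(α−1)) · log ∫ (dP/dQ)^α dQ`, and `⊤` if `P` is not absolutely
continuous with respect to `Q`. -/

noncomputable def renyiDiv {Ω : Type*} [MeasurableSpace Ω] (α : ℝ) (P Q : Measure Ω) : EReal :=
  if P ≪ Q then ((α - 1)⁻¹ : ℝ) * ENNReal.log (∫⁻ x, P.rnDeriv Q x ^ α ∂Q) else ⊤

section Aux
variable {Ω₁ Ω₂ : Type*} [MeasurableSpace Ω₁] [MeasurableSpace Ω₂]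

lemma prod_eq_withDensity (P₁ Q₁ : Measure Ω₁) (P₂ Q₂ : Measure Ω₂)
    [IsProbabilityMeasure P₁] [IsProbabilityMeasure Q₁]
    [IsProbabilityMeasure P₂] [IsProbabilityMeasure Q₂]
    (h₁ : P₁ ≪ Q₁) (h₂ : P₂ ≪ Q₂) :
    P₁.prod P₂ = (Q₁.prod Q₂).withDensity
      (fun p => P₁.rnDeriv Q₁ p.1 * P₂.rnDeriv Q₂ p.2) := by
  have hf := Measure.measurable_rnDeriv P₁ Q₁
  have hg := Measure.measurable_rnDeriv P₂ Q₂
  have hh : Measurable (fun p : Ω₁ × Ω₂ => P₁.rnDeriv Q₁ p.1 * P₂.rnDeriv Q₂ p.2) :=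
    (hf.comp measurable_fst).mul (hg.comp measurable_snd)
  refine Measure.prod_eq fun s t hs ht => ?_
  rw [withDensity_apply _ (hs.prod ht), ← Measure.prod_restrict,
    lintegral_prod_mul hf.aemeasurable hg.aemeasurable,
    Measure.setLIntegral_rnDeriv h₁ s, Measure.setLIntegral_rnDeriv h₂ t]
end Aux

section Aux2
variable {Ω₁ Ω₂ : Type*} [MeasurableSpace Ω₁] [MeasurableSpace Ω₂]

lemma lintegral_rpow_rnDeriv_ne_zero {Ω : Type*} [MeasurableSpace Ω] {α : ℝ} (hα : 1 < α)
    (P Q : Measure Ω) [IsProbabilityMeasure P] [IsProbabilityMeasure Q] (hac : P ≪ Q) :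
    (∫⁻ x, P.rnDeriv Q x ^ α ∂Q) ≠ 0 := by
  intro h0
  have hm : Measurable fun x => P.rnDeriv Q x ^ α :=
    (Measure.measurable_rnDeriv P Q).pow_const α
  have hz := (lintegral_eq_zero_iff hm).mp h0
  have hz' : P.rnDeriv Q =ᵐ[Q] 0 := by
    filter_upwards [hz] with x hx
    have : P.rnDeriv Q x ^ α = 0 := hx
    rw [ENNReal.rpow_eq_zero_iff] at this
    rcases this with ⟨h, _⟩ | ⟨_, h⟩
    · exact h
    · linarith
  have hP0 : P = 0 := by
    rw [← Measure.withDensity_rnDeriv_eq P Q hac, withDensity_congr_ae hz']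
    simp
  have := measure_univ (μ := P)
  rw [hP0] at this
  simp at this

lemma renyiDiv_prod_le_add (α : ℝ) (hα : 1 < α) (ε₁ ε₂ : ℝ)
    (P₁ Q₁ : Measure Ω₁) (P₂ Q₂ : Measure Ω₂)
    [IsProbabilityMeasure P₁] [IsProbabilityMeasure Q₁]
    [IsProbabilityMeasure P₂] [IsProbabilityMeasure Q₂]
    (h₁ : renyiDiv α P₁ Q₁ ≤ (ε₁ : EReal)) (h₂ : renyiDiv α P₂ Q₂ ≤ (ε₂ : EReal)) :
    renyiDiv α (P₁.prod P₂) (Q₁.prod Q₂) ≤ (ε₁ : EReal) + (ε₂ : EReal) := by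
  have hα0 : (0:ℝ) < α := by linarith
  have hc : (0:ℝ) < (α-1)⁻¹ := inv_pos.2 (by linarith)
  have hac₁ : P₁ ≪ Q₁ := by
    by_contra h
    rw [renyiDiv, if_neg h, top_le_iff] at h₁
    exact EReal.coe_ne_top ε₁ h₁
  have hac₂ : P₂ ≪ Q₂ := by
    by_contra h
    rw [renyiDiv, if_neg h, top_le_iff] at h₂
    exact EReal.coe_ne_top ε₂ h₂
  rw [renyiDiv, if_pos hac₁] at h₁
  rw [renyiDiv, if_pos hac₂] at h₂
  have hf := Measure.measurable_rnDeriv P₁ Q₁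
  have hg := Measure.measurable_rnDeriv P₂ Q₂
  set A := ∫⁻ x, P₁.rnDeriv Q₁ x ^ α ∂Q₁ with hA
  set B := ∫⁻ x, P₂.rnDeriv Q₂ x ^ α ∂Q₂ with hB
  -- nonvanishing
  have hA0 : A ≠ 0 := by rw [hA]; exact lintegral_rpow_rnDeriv_ne_zero hα P₁ Q₁ hac₁
  have hB0 : B ≠ 0 := by rw [hB]; exact lintegral_rpow_rnDeriv_ne_zero hα P₂ Q₂ hac₂
  have hAt : A ≠ ⊤ := by
    intro h
    rw [h, ENNReal.log_top] at h₁
    rw [EReal.coe_mul_top_of_pos hc, top_le_iff] at h₁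
    exact EReal.coe_ne_top ε₁ h₁
  have hBt : B ≠ ⊤ := by
    intro h
    rw [h, ENNReal.log_top] at h₂
    rw [EReal.coe_mul_top_of_pos hc, top_le_iff] at h₂
    exact EReal.coe_ne_top ε₂ h₂
  -- product integral
  have hacp : P₁.prod P₂ ≪ Q₁.prod Q₂ := hac₁.prod hac₂
  have hh : Measurable (fun p : Ω₁ × Ω₂ => P₁.rnDeriv Q₁ p.1 * P₂.rnDeriv Q₂ p.2) :=
    (hf.comp measurable_fst).mul (hg.comp measurable_snd)
  have hrn : (P₁.prod P₂).rnDeriv (Q₁.prod Q₂)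
      =ᵐ[Q₁.prod Q₂] fun p => P₁.rnDeriv Q₁ p.1 * P₂.rnDeriv Q₂ p.2 := by
    rw [prod_eq_withDensity P₁ Q₁ P₂ Q₂ hac₁ hac₂]
    exact Measure.rnDeriv_withDensity _ hh
  have hint : ∫⁻ p, (P₁.prod P₂).rnDeriv (Q₁.prod Q₂) p ^ α ∂(Q₁.prod Q₂) = A * B := by
    calc ∫⁻ p, (P₁.prod P₂).rnDeriv (Q₁.prod Q₂) p ^ α ∂(Q₁.prod Q₂)
        = ∫⁻ p, (P₁.rnDeriv Q₁ p.1 * P₂.rnDeriv Q₂ p.2) ^ α ∂(Q₁.prod Q₂) :=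
          lintegral_congr_ae (hrn.mono fun p hp => by dsimp only; rw [hp])
      _ = ∫⁻ p, (P₁.rnDeriv Q₁ p.1) ^ α * (P₂.rnDeriv Q₂ p.2) ^ α ∂(Q₁.prod Q₂) := by
          apply lintegral_congr fun p => ENNReal.mul_rpow_of_nonneg _ _ hα0.le
      _ = A * B := lintegral_prod_mul (hf.pow_const α).aemeasurable (hg.pow_const α).aemeasurable
  rw [renyiDiv, if_pos hacp, hint, ENNReal.log_mul_add]
  -- everything is real now
  set a := ENNReal.log A with ha
  set b := ENNReal.log B with hb
  have ha' : a = ((a.toReal : ℝ) : EReal) :=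
    (EReal.coe_toReal (by simp [ha, hAt]) (by simp [ha, hA0])).symm
  have hb' : b = ((b.toReal : ℝ) : EReal) :=
    (EReal.coe_toReal (by simp [hb, hBt]) (by simp [hb, hB0])).symm
  rw [ha'] at h₁ ⊢
  rw [hb'] at h₂ ⊢
  rw [← EReal.coe_mul] at h₁ h₂
  rw [← EReal.coe_add, ← EReal.coe_mul, ← EReal.coe_add]
  rw [EReal.coe_le_coe_iff] at h₁ h₂ ⊢
  nlinarith [h₁, h₂]
end Aux2

/-- **Additivity of Rényi divergence under products, and RDP composition.**
If `D_α(P₁‖Q₁) ≤ ε₁` and `D_α(P₂‖Q₂) ≤ ε₂` then `D_α(P₁ ⊗ P₂ ‖ Q₁ ⊗ Q₂) ≤ ε₁ + ε₂`;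
consequently the sequential composition of an `(α, ε₁)`-RDP mechanism and an
`(α, ε₂)`-RDP mechanism is `(α, ε₁ + ε₂)`-RDP. -/
theorem renyiDiv_prod_le_add_and_rdp_composition
    {Ω₁ Ω₂ : Type*} [MeasurableSpace Ω₁] [MeasurableSpace Ω₂]
    (α : ℝ) (hα : 1 < α) (ε₁ ε₂ : ℝ)
    (P₁ Q₁ : Measure Ω₁) (P₂ Q₂ : Measure Ω₂)
    [IsProbabilityMeasure P₁] [IsProbabilityMeasure Q₁]
    [IsProbabilityMeasure P₂] [IsProbabilityMeasure Q₂]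
    (hP₁ : renyiDiv α P₁ Q₁ ≤ (ε₁ : EReal)) (hP₂ : renyiDiv α P₂ Q₂ ≤ (ε₂ : EReal))
    {Data : Type*} (adj : Data → Data → Prop)
    (M₁ : Data → Measure Ω₁) (M₂ : Data → Measure Ω₂)
    [∀ d, IsProbabilityMeasure (M₁ d)] [∀ d, IsProbabilityMeasure (M₂ d)]
    (hM₁ : ∀ D D', adj D D' → renyiDiv α (M₁ D) (M₁ D') ≤ (ε₁ : EReal))
    (hM₂ : ∀ D D', adj D D' → renyiDiv α (M₂ D) (M₂ D') ≤ (ε₂ : EReal)) :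
    renyiDiv α (P₁.prod P₂) (Q₁.prod Q₂) ≤ (ε₁ : EReal) + (ε₂ : EReal) ∧
    ∀ D D', adj D D' →
      renyiDiv α ((M₁ D).prod (M₂ D)) ((M₁ D').prod (M₂ D')) ≤ (ε₁ : EReal) + (ε₂ : EReal) := by
  exact ⟨renyiDiv_prod_le_add α hα ε₁ ε₂ P₁ Q₁ P₂ Q₂ hP₁ hP₂,
    fun D D' h => renyiDiv_prod_le_add α hα ε₁ ε₂ _ _ _ _ (hM₁ D D' h) (hM₂ D D' h)⟩
end

section
/- Let α > 1 and ε ≥ 0, and let M be a randomized mechanism satisfying (α, ε)-RDP with respect to an adjacency relation on datasets. Then for every δ ∈ (0, 1), M satisfies (ε + log(1/δ)/(α − 1), δ)-differential privacy: for all adjacent datasets D, D' and every measurable set S, M(D)(S) ≤ e^{ε + log(1/δ)/(α−1)} · M(D')(S) + δ. -/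
open MeasureTheory Classical

/-- **RDP to (ε, δ)-DP conversion.** If a mechanism `M` satisfies `(α, ε)`-RDP, then for any
`δ ∈ (0, 1)` it satisfies `(ε + log(1/δ)/(α − 1), δ)`-differential privacy. -/
theorem rdp_to_approx_dp
    {Data : Type*} {Ω : Type*} [MeasurableSpace Ω]
    (adj : Data → Data → Prop) (M : Data → Measure Ω)
    [∀ d, IsProbabilityMeasure (M d)]
    (α ε : ℝ) (hα : 1 < α) (hε : 0 ≤ ε)
    (hRDP : ∀ D D', adj D D' → renyiDiv α (M D) (M D') ≤ (ε : EReal)) :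
    ∀ δ : ℝ, 0 < δ → δ < 1 → ∀ D D', adj D D' → ∀ S : Set Ω, MeasurableSet S →
      M D S ≤ ENNReal.ofReal (Real.exp (ε + Real.log (1 / δ) / (α - 1))) * M D' S
        + ENNReal.ofReal δ := by
  intro δ hδ hδ1 D D' hadj S hS
  set P := M D
  set Q := M D'
  set f := P.rnDeriv Q with hf
  have hα1 : (0:ℝ) < α - 1 := by linarith
  -- absolute continuity
  have hle := hRDP D D' hadj
  have hPQ : P ≪ Q := by
    by_contra h
    rw [renyiDiv, if_neg h] at hle
    exact absurd hle (by simp)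
  rw [renyiDiv, if_pos hPQ] at hle
  set I := ∫⁻ x, f x ^ α ∂Q with hI
  -- bound on I
  have hIle : I ≤ ENNReal.ofReal (Real.exp ((α - 1) * ε)) := by
    have h1 : ENNReal.log I / ((α - 1 : ℝ) : EReal) ≤ (ε : EReal) := by
      rw [EReal.div_eq_inv_mul, ← EReal.coe_inv]
      exact hle
    have h2 : ENNReal.log I ≤ (((α - 1) * ε : ℝ) : EReal) := by
      rw [EReal.div_le_iff_le_mul (by exact_mod_cast hα1) (EReal.coe_ne_top (α - 1))] at h1
      rw [EReal.coe_mul]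
      exact h1
    rw [← ENNReal.log_le_log_iff]
    rwa [ENNReal.log_ofReal_of_pos (Real.exp_pos _), Real.log_exp]
  -- the threshold
  set ε' := ε + Real.log (1 / δ) / (α - 1) with hε'
  set t : ENNReal := ENNReal.ofReal (Real.exp ε') with ht
  have ht0 : 0 < t := ENNReal.ofReal_pos.mpr (Real.exp_pos _)
  have httop : t ≠ ⊤ := ENNReal.ofReal_ne_top
  have hfmeas : Measurable f := Measure.measurable_rnDeriv P Q
  set A := S ∩ {x | t < f x} with hA
  set B := S ∩ {x | f x ≤ t} with hB
  have hAm : MeasurableSet A := hS.inter (measurableSet_lt measurable_const hfmeas)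
  have hBm : MeasurableSet B := hS.inter (measurableSet_le hfmeas measurable_const)
  have hSBA : S = B ∪ A := by
    ext x
    simp only [hA, hB, Set.mem_union, Set.mem_inter_iff, Set.mem_setOf_eq]
    constructor
    · intro hx
      rcases le_or_gt (f x) t with h | h
      · exact Or.inl ⟨hx, h⟩
      · exact Or.inr ⟨hx, h⟩
    · rintro (⟨hx, _⟩ | ⟨hx, _⟩) <;> exact hx
  -- bound on B
  have hPB : P B ≤ t * Q S := by
    rw [← Measure.setLIntegral_rnDeriv' hPQ hBm]
    calc ∫⁻ x in B, f x ∂Q ≤ ∫⁻ _ in B, t ∂Q := by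
          refine setLIntegral_mono measurable_const fun x hx => ?_
          exact hx.2
      _ = t * Q B := by rw [setLIntegral_const]
      _ ≤ t * Q S := by
          exact mul_le_mul_right (measure_mono Set.inter_subset_left) t
  -- bound on A
  have hPA : P A ≤ ENNReal.ofReal δ := by
    rw [← Measure.setLIntegral_rnDeriv' hPQ hAm]
    have hpt : ∀ x ∈ A, f x ≤ t ^ (1 - α) * f x ^ α := by
      intro x hx
      have hxt : t < f x := hx.2
      by_cases hfx : f x = ⊤
      · rw [hfx, ENNReal.top_rpow_of_pos (by linarith)]
        rw [ENNReal.mul_top (ENNReal.rpow_pos ht0 httop).ne']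
      · have hfx0 : f x ≠ 0 := (lt_trans ht0 hxt).ne'
        have h1 : f x ^ (1 - α) ≤ t ^ (1 - α) := by
          have : (1 - α) = -(α - 1) := by ring
          rw [this, ENNReal.rpow_neg, ENNReal.rpow_neg]
          exact ENNReal.inv_le_inv.mpr
            (ENNReal.rpow_le_rpow hxt.le (by linarith))
        calc f x = f x ^ ((1 - α) + α) := by
              rw [show (1 - α) + α = 1 by ring, ENNReal.rpow_one]
          _ = f x ^ (1 - α) * f x ^ α := ENNReal.rpow_add _ _ hfx0 hfx
          _ ≤ t ^ (1 - α) * f x ^ α := mul_le_mul_left h1 _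
    calc ∫⁻ x in A, f x ∂Q ≤ ∫⁻ x in A, t ^ (1 - α) * f x ^ α ∂Q :=
          setLIntegral_mono (measurable_const.mul (hfmeas.pow_const α)) hpt
      _ = t ^ (1 - α) * ∫⁻ x in A, f x ^ α ∂Q := lintegral_const_mul' _ _
          (by
            have : (1 - α) = -(α - 1) := by ring
            rw [this, ENNReal.rpow_neg]
            exact ENNReal.inv_ne_top.mpr (ENNReal.rpow_pos ht0 httop).ne')
      _ ≤ t ^ (1 - α) * I := mul_le_mul_right (setLIntegral_le_lintegral _ _) _
      _ ≤ t ^ (1 - α) * ENNReal.ofReal (Real.exp ((α - 1) * ε)) := mul_le_mul_right hIle _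
      _ = ENNReal.ofReal δ := by
          rw [ht, ENNReal.ofReal_rpow_of_pos (Real.exp_pos _),
            ← ENNReal.ofReal_mul (Real.rpow_nonneg (Real.exp_pos _).le _)]
          congr 1
          rw [← Real.exp_log (x := Real.exp ε' ^ (1 - α))
            (Real.rpow_pos_of_pos (Real.exp_pos _) _), Real.log_rpow (Real.exp_pos _),
            Real.log_exp, ← Real.exp_add]
          rw [← Real.exp_log hδ]
          congr 1
          rw [hε', one_div, Real.log_inv]
          field_simp
          ring
  calc P S = P (B ∪ A) := by rw [← hSBA]
    _ ≤ P B + P A := measure_union_le _ _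
    _ ≤ t * Q S + ENNReal.ofReal δ := add_le_add hPB hPA
end

section
/- For any μ₁, μ₂ ∈ ℝ, σ > 0, and α > 1, the Rényi divergence of order α between the real Gaussian measures 𝒩(μ₁, σ²) and 𝒩(μ₂, σ²) equals α·(μ₁ − μ₂)²/(2σ²). -/
open MeasureTheory Classical

/-! Writing `p`, `q` for the two Gaussian densities, `dP/dQ = p / q`, so
`∫ (dP/dQ)^α dQ = ∫ q (p/q)^α`. Completing the square in the exponent, `q (p/q)^α` is
`exp (α (α - 1) (μ₁ - μ₂)² / (2σ²))` times the Gaussian density with mean `α μ₁ + (1 - α) μ₂`,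
which integrates to one; taking the logarithm and dividing by `α - 1` gives the claim. -/

open scoped NNReal ENNReal

section
variable {X : Type*} [MeasurableSpace X]

lemma renyiDiv_eq_of_lintegral_rnDeriv_rpow_eq_exp {α c : ℝ} {P Q : Measure X} (hPQ : P ≪ Q)
    (h : ∫⁻ x, P.rnDeriv Q x ^ α ∂Q = ENNReal.ofReal (Real.exp c)) :
    renyiDiv α P Q = ((α - 1)⁻¹ * c : ℝ) := by
  rw [renyiDiv, if_pos hPQ, h, ENNReal.log_ofReal_of_pos (Real.exp_pos c), Real.log_exp,
    EReal.coe_mul]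

lemma lintegral_rnDeriv_withDensity_rpow {ν : Measure X} [SigmaFinite ν] {p q : X → ℝ≥0∞}
    (hp : Measurable p) (hq : Measurable q) (hq_pos : ∀ x, q x ≠ 0) (hq_top : ∀ x, q x ≠ ∞)
    (α : ℝ) :
    ∫⁻ x, (ν.withDensity p).rnDeriv (ν.withDensity q) x ^ α ∂(ν.withDensity q)
      = ∫⁻ x, q x * (p x / q x) ^ α ∂ν := by
  have : SigmaFinite (ν.withDensity q) := SigmaFinite.withDensity_of_ne_top (ae_of_all _ hq_top)
  have h_eq : ν.withDensity p = (ν.withDensity q).withDensity (p / q) := by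
    rw [← withDensity_mul _ hq (hp.div hq)]
    congr 1
    ext x
    exact (ENNReal.mul_div_cancel (hq_pos x) (hq_top x)).symm
  have h_rn : (ν.withDensity p).rnDeriv (ν.withDensity q) =ᵐ[ν.withDensity q] p / q := by
    rw [h_eq]
    exact Measure.rnDeriv_withDensity _ (hp.div hq)
  rw [lintegral_congr_ae (h_rn.mono fun x hx => by rw [hx]),
    lintegral_withDensity_eq_lintegral_mul _ hq ((hp.div hq).pow_const α)]
  rfl

end

namespace ProbabilityTheory

open Real

lemma gaussianPDFReal_mul_div_rpow (μ₁ μ₂ : ℝ) {v : ℝ≥0} (hv : v ≠ 0) (α x : ℝ) :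
    gaussianPDFReal μ₂ v x * (gaussianPDFReal μ₁ v x / gaussianPDFReal μ₂ v x) ^ α
      = exp (α * (α - 1) * (μ₁ - μ₂) ^ 2 / (2 * v))
        * gaussianPDFReal (α * μ₁ + (1 - α) * μ₂) v x := by
  have hv' : (0 : ℝ) < v := by positivity
  have hc : (√(2 * π * v))⁻¹ ≠ 0 := by positivity
  have h_exponent : -(x - μ₂) ^ 2 / (2 * v) + (-(x - μ₁) ^ 2 / (2 * v) - -(x - μ₂) ^ 2 / (2 * v)) * α
      = α * (α - 1) * (μ₁ - μ₂) ^ 2 / (2 * v) + -(x - (α * μ₁ + (1 - α) * μ₂)) ^ 2 / (2 * v) := by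
    field_simp
    ring
  simp only [gaussianPDFReal]
  rw [mul_div_mul_left _ _ hc, ← exp_sub, rpow_def_of_pos (exp_pos _), log_exp, mul_assoc,
    ← exp_add, h_exponent, exp_add]
  ring

lemma lintegral_gaussianPDF_mul_div_rpow (μ₁ μ₂ : ℝ) {v : ℝ≥0} (hv : v ≠ 0) (α : ℝ) :
    ∫⁻ x, gaussianPDF μ₂ v x * (gaussianPDF μ₁ v x / gaussianPDF μ₂ v x) ^ α
      = ENNReal.ofReal (exp (α * (α - 1) * (μ₁ - μ₂) ^ 2 / (2 * v))) := by
  have h_pt (x : ℝ) : gaussianPDF μ₂ v x * (gaussianPDF μ₁ v x / gaussianPDF μ₂ v x) ^ α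
      = ENNReal.ofReal (exp (α * (α - 1) * (μ₁ - μ₂) ^ 2 / (2 * v)))
        * gaussianPDF (α * μ₁ + (1 - α) * μ₂) v x := by
    have hp := gaussianPDFReal_pos μ₁ v x hv
    have hq := gaussianPDFReal_pos μ₂ v x hv
    rw [gaussianPDF, gaussianPDF, gaussianPDF, ← ENNReal.ofReal_div_of_pos hq,
      ENNReal.ofReal_rpow_of_pos (div_pos hp hq), ← ENNReal.ofReal_mul hq.le,
      ← ENNReal.ofReal_mul (exp_pos _).le, gaussianPDFReal_mul_div_rpow μ₁ μ₂ hv]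
  simp_rw [h_pt]
  rw [lintegral_const_mul _ (measurable_gaussianPDF _ _), lintegral_gaussianPDF_eq_one _ hv,
    mul_one]

lemma lintegral_rnDeriv_gaussianReal_rpow (μ₁ μ₂ : ℝ) {v : ℝ≥0} (hv : v ≠ 0) (α : ℝ) :
    ∫⁻ x, (gaussianReal μ₁ v).rnDeriv (gaussianReal μ₂ v) x ^ α ∂(gaussianReal μ₂ v)
      = ENNReal.ofReal (exp (α * (α - 1) * (μ₁ - μ₂) ^ 2 / (2 * v))) := by
  rw [gaussianReal_of_var_ne_zero _ hv, gaussianReal_of_var_ne_zero _ hv,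
    lintegral_rnDeriv_withDensity_rpow (measurable_gaussianPDF _ _) (measurable_gaussianPDF _ _)
      (fun x => (gaussianPDF_pos _ hv x).ne') (fun _ => gaussianPDF_ne_top),
    lintegral_gaussianPDF_mul_div_rpow μ₁ μ₂ hv]

lemma gaussianReal_absolutelyContinuous_gaussianReal (μ₁ μ₂ : ℝ) {v : ℝ≥0} (hv : v ≠ 0) :
    gaussianReal μ₁ v ≪ gaussianReal μ₂ v :=
  (gaussianReal_absolutelyContinuous μ₁ hv).trans (gaussianReal_absolutelyContinuous' μ₂ hv)

end ProbabilityTheory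

/-- **Rényi divergence between equal-variance real Gaussians.**
For `μ₁, μ₂ ∈ ℝ`, `σ > 0` and `α > 1`,
`D_α(𝒩(μ₁, σ²) ‖ 𝒩(μ₂, σ²)) = α (μ₁ − μ₂)² / (2σ²)`. -/
theorem renyiDiv_gaussianReal
    (μ₁ μ₂ σ : ℝ) (hσ : 0 < σ) (α : ℝ) (hα : 1 < α) :
    renyiDiv α (ProbabilityTheory.gaussianReal μ₁ ((σ ^ 2).toNNReal))
        (ProbabilityTheory.gaussianReal μ₂ ((σ ^ 2).toNNReal))
      = ((α * (μ₁ - μ₂) ^ 2 / (2 * σ ^ 2) : ℝ) : EReal) := by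
  have hv : (σ ^ 2).toNNReal ≠ 0 := by simpa using hσ.ne'
  rw [renyiDiv_eq_of_lintegral_rnDeriv_rpow_eq_exp
    (ProbabilityTheory.gaussianReal_absolutelyContinuous_gaussianReal μ₁ μ₂ hv)
    (ProbabilityTheory.lintegral_rnDeriv_gaussianReal_rpow μ₁ μ₂ hv α),
    Real.coe_toNNReal _ (sq_nonneg σ)]
  have hα' : α - 1 ≠ 0 := sub_ne_zero.mpr hα.ne'
  congr 1
  field_simp
end

section
/- Let f be a function from datasets to ℝ^d whose ℓ₂ sensitivity is at most Δ > 0, i.e., ‖f(D) − f(D')‖₂ ≤ Δ for all adjacent datasets D, D'. For σ > 0 and any α > 1, the Gaussian mechanism M(D) = f(D) + 𝒩(0, σ²·I_d) satisfies (α, α·Δ²/(2σ²))-RDP: for all adjacent datasets D, D', D_α(M(D)‖M(D')) ≤ α·Δ²/(2σ²). -/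
open MeasureTheory Classical

open ProbabilityTheory
open scoped ENNReal NNReal

/-- Tonelli for a product of one-variable functions over a finite product measure. -/
lemma lintegral_pi_prod {n : ℕ} {E : Type*} [MeasurableSpace E]
    (μ : Fin n → Measure E) [∀ i, SigmaFinite (μ i)]
    (f : Fin n → E → ℝ≥0∞) (hf : ∀ i, Measurable (f i)) :
    ∫⁻ x, ∏ i, f i (x i) ∂(Measure.pi μ) = ∏ i, ∫⁻ y, f i y ∂(μ i) := by
  induction n with
  | zero =>
      simp [Measure.pi_of_empty]
  | succ n ih =>
      have hFmeas : Measurable (fun p : E × (Fin n → E) =>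
          f 0 p.1 * ∏ j, f (Fin.succ j) (p.2 j)) :=
        ((hf 0).comp measurable_fst).mul
          (Finset.measurable_prod _ fun j _ =>
            (hf _).comp ((measurable_pi_apply j).comp measurable_snd))
      have key := (measurePreserving_piFinSuccAbove μ 0).lintegral_comp hFmeas
      have heq : ∀ x : Fin (n+1) → E,
          (fun p : E × (Fin n → E) => f 0 p.1 * ∏ j, f (Fin.succ j) (p.2 j))
              ((MeasurableEquiv.piFinSuccAbove (fun _ : Fin (n+1) => E) 0) x)
            = ∏ i, f i (x i) := by
        intro x
        rw [Fin.prod_univ_succ]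
        simp [MeasurableEquiv.piFinSuccAbove, Fin.zero_succAbove, Fin.tail]
      have hg : AEMeasurable (fun y : Fin n → E => ∏ j, f (Fin.succ j) (y j))
          (Measure.pi fun j => μ ((0 : Fin (n+1)).succAbove j)) :=
        (Finset.measurable_prod _ fun j _ =>
          (hf _).comp (measurable_pi_apply j)).aemeasurable
      calc ∫⁻ x, ∏ i, f i (x i) ∂(Measure.pi μ)
          = ∫⁻ x, (fun p : E × (Fin n → E) => f 0 p.1 * ∏ j, f (Fin.succ j) (p.2 j))
              ((MeasurableEquiv.piFinSuccAbove (fun _ : Fin (n+1) => E) 0) x)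
              ∂(Measure.pi μ) := lintegral_congr fun x => (heq x).symm
        _ = ∫⁻ p : E × (Fin n → E), f 0 p.1 * ∏ j, f (Fin.succ j) (p.2 j)
              ∂((μ 0).prod (Measure.pi fun j => μ ((0 : Fin (n+1)).succAbove j))) := key
        _ = (∫⁻ y, f 0 y ∂(μ 0)) * ∫⁻ y, ∏ j, f (Fin.succ j) (y j)
              ∂(Measure.pi fun j => μ ((0 : Fin (n+1)).succAbove j)) :=
            lintegral_prod_mul (hf 0).aemeasurable hg
        _ = ∏ i, ∫⁻ y, f i y ∂(μ i) := by
            rw [Fin.prod_univ_succ]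
            congr 1
            have hfam : (fun j : Fin n => μ ((0 : Fin (n+1)).succAbove j))
                = fun j : Fin n => μ (Fin.succ j) :=
              funext fun j => congrArg μ (Fin.zero_succAbove j)
            rw [hfam]
            exact ih _ _ (fun j => hf _)

/-- A finite product of measures with densities is the product measure with the product
density. -/
lemma pi_withDensity_prod {n : ℕ} (g : Fin n → ℝ → ℝ≥0∞) (hg : ∀ i, Measurable (g i))
    (hsf : ∀ i, SigmaFinite ((volume : Measure ℝ).withDensity (g i))) :
    Measure.pi (fun i => (volume : Measure ℝ).withDensity (g i))
      = (Measure.pi fun _ : Fin n => (volume : Measure ℝ)).withDensity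
          (fun x => ∏ i, g i (x i)) := by
  haveI := hsf
  refine Measure.pi_eq (μ := fun i => (volume : Measure ℝ).withDensity (g i)) fun s hs => ?_
  rw [withDensity_apply _ (MeasurableSet.univ_pi hs),
    ← lintegral_indicator (MeasurableSet.univ_pi hs)]
  have hind : (Set.univ.pi s).indicator (fun x : Fin n → ℝ => ∏ i, g i (x i))
      = fun x => ∏ i, (s i).indicator (g i) (x i) := by
    funext x
    by_cases hx : x ∈ Set.univ.pi s
    · rw [Set.indicator_of_mem hx]
      exact Finset.prod_congr rfl fun i _ =>
        (Set.indicator_of_mem (hx i (Set.mem_univ i)) _).symm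
    · rw [Set.indicator_of_notMem hx]
      rw [Set.mem_univ_pi, not_forall] at hx
      obtain ⟨i, hi⟩ := hx
      exact (Finset.prod_eq_zero (Finset.mem_univ i)
        (Set.indicator_of_notMem hi _)).symm
  rw [hind, lintegral_pi_prod _ _ (fun i => (hg i).indicator (hs i))]
  refine Finset.prod_congr rfl fun i _ => ?_
  rw [withDensity_apply _ (hs i), ← lintegral_indicator (hs i)]

/-- The elementary identity on Gaussian densities behind the shift by `(y-b)² - (y-a)²`. -/
lemma gaussianPDFReal_mul_exp (a b : ℝ) {v : ℝ≥0} (hv : 0 < (v : ℝ)) (α : ℝ) (y : ℝ) :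
    gaussianPDFReal b v y * Real.exp (α * (((y - b) ^ 2 - (y - a) ^ 2) / (2 * (v : ℝ))))
      = Real.exp (α * (α - 1) * (a - b) ^ 2 / (2 * (v : ℝ))) *
          gaussianPDFReal (α * a + (1 - α) * b) v y := by
  simp only [gaussianPDFReal]
  rw [mul_assoc, ← Real.exp_add, mul_left_comm, ← Real.exp_add]
  congr 1
  have hv' : (v : ℝ) ≠ 0 := hv.ne'
  field_simp
  ring

/-- The one-dimensional Gaussian Rényi integral. -/
lemma gauss_key (a b : ℝ) {v : ℝ≥0} (hv : 0 < (v : ℝ)) (α : ℝ) :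
    ∫⁻ y, ENNReal.ofReal (gaussianPDFReal b v y *
        Real.exp (α * (((y - b) ^ 2 - (y - a) ^ 2) / (2 * (v : ℝ))))) ∂volume
      = ENNReal.ofReal (Real.exp (α * (α - 1) * (a - b) ^ 2 / (2 * (v : ℝ)))) := by
  have hv0 : v ≠ 0 := by
    intro h; rw [h] at hv; simp at hv
  simp_rw [gaussianPDFReal_mul_exp a b hv α,
    ENNReal.ofReal_mul (Real.exp_nonneg _)]
  rw [lintegral_const_mul _ ((measurable_gaussianPDFReal _ _).ennreal_ofReal),
    lintegral_gaussianPDFReal_eq_one _ hv0, mul_one]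

/-- **RDP of the Gaussian mechanism.**
If `f` maps datasets to `ℝ^d` with ℓ₂ sensitivity at most `Δ`, then for any `σ > 0` and `α > 1`
the Gaussian mechanism `M(D) = f(D) + 𝒩(0, σ² I_d)` satisfies `(α, α Δ² / (2σ²))`-RDP:
`D_α(M(D) ‖ M(D')) ≤ α Δ² / (2σ²)` for all adjacent `D, D'`. -/
theorem gaussian_mechanism_rdp
    {Data : Type*} (adj : Data → Data → Prop) (d : ℕ)
    (f : Data → (Fin d → ℝ)) (Δ : ℝ) (hΔ : 0 < Δ)
    (hsens : ∀ D D', adj D D' →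
      Real.sqrt (∑ i, (f D i - f D' i) ^ 2) ≤ Δ)
    (σ : ℝ) (hσ : 0 < σ) (α : ℝ) (hα : 1 < α)
    (M : Data → Measure (Fin d → ℝ))
    (hM : ∀ D, M D = Measure.map (fun x i => f D i + x i)
      (Measure.pi fun _ : Fin d => ProbabilityTheory.gaussianReal 0 ((σ ^ 2).toNNReal))) :
    ∀ D D', adj D D' →
      renyiDiv α (M D) (M D') ≤ ((α * Δ ^ 2 / (2 * σ ^ 2) : ℝ) : EReal) := by
  intro D D' hadj
  set v : ℝ≥0 := (σ ^ 2).toNNReal with hv_def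
  have hvσ : (v : ℝ) = σ ^ 2 := Real.coe_toNNReal _ (sq_nonneg σ)
  have hvpos : 0 < (v : ℝ) := by rw [hvσ]; positivity
  have hv0 : v ≠ 0 := by
    intro h; rw [h] at hvpos; simp at hvpos
  set a : Fin d → ℝ := f D with ha_def
  set b : Fin d → ℝ := f D' with hb_def
  -- Step 1: the mechanism is a product of shifted Gaussians.
  have hmap : ∀ c : Fin d → ℝ,
      Measure.map (fun x i => c i + x i)
          (Measure.pi fun _ : Fin d => gaussianReal 0 v)
        = Measure.pi (fun i => gaussianReal (c i) v) := by
    intro c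
    have h : ∀ i : Fin d, MeasurePreserving (fun t => c i + t)
        (gaussianReal 0 v) (gaussianReal (c i) v) := by
      intro i
      refine ⟨measurable_const_add _, ?_⟩
      have hfun : (fun t : ℝ => c i + t) = (· + c i) := by funext t; ring
      rw [hfun, gaussianReal_map_add_const, zero_add]
    exact (measurePreserving_pi _ _ h).map_eq
  have hMD : M D = Measure.pi (fun i => gaussianReal (a i) v) := by
    rw [hM D]; exact hmap a
  have hMD' : M D' = Measure.pi (fun i => gaussianReal (b i) v) := by
    rw [hM D']; exact hmap b
  -- Step 2: densities.
  have hdens : ∀ c : Fin d → ℝ,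
      Measure.pi (fun i => gaussianReal (c i) v)
        = (Measure.pi fun _ : Fin d => (volume : Measure ℝ)).withDensity
            (fun x => ∏ i, ENNReal.ofReal (gaussianPDFReal (c i) v (x i))) := by
    intro c
    have h1 : ∀ i : Fin d, gaussianReal (c i) v
        = (volume : Measure ℝ).withDensity
            (fun y => ENNReal.ofReal (gaussianPDFReal (c i) v y)) := by
      intro i
      rw [gaussianReal_of_var_ne_zero _ hv0, gaussianPDF_def]
    calc Measure.pi (fun i => gaussianReal (c i) v)
        = Measure.pi (fun i => (volume : Measure ℝ).withDensity
            (fun y => ENNReal.ofReal (gaussianPDFReal (c i) v y))) :=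
          congrArg _ (funext h1)
      _ = _ := by
          refine pi_withDensity_prod _
            (fun i => (measurable_gaussianPDFReal _ _).ennreal_ofReal) (fun i => ?_)
          rw [← h1 i]; infer_instance
  set Q : Measure (Fin d → ℝ) := Measure.pi (fun i => gaussianReal (b i) v) with hQ_def
  set P : Measure (Fin d → ℝ) := Measure.pi (fun i => gaussianReal (a i) v) with hP_def
  have hGmeas : Measurable (fun x : Fin d → ℝ =>
      ∏ i, ENNReal.ofReal (gaussianPDFReal (b i) v (x i))) :=
    Finset.measurable_prod _ fun i _ =>
      ((measurable_gaussianPDFReal _ _).comp (measurable_pi_apply i)).ennreal_ofReal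
  set h : (Fin d → ℝ) → ℝ≥0∞ :=
    fun x => ENNReal.ofReal (Real.exp
      (∑ i, ((x i - b i) ^ 2 - (x i - a i) ^ 2) / (2 * (v : ℝ)))) with hh_def
  have hhmeas : Measurable h := by
    refine Measurable.ennreal_ofReal (Real.measurable_exp.comp ?_)
    exact Finset.measurable_sum _ fun i _ => by fun_prop
  -- pointwise: G * h = density of P
  have hGh : ∀ x : Fin d → ℝ,
      (∏ i, ENNReal.ofReal (gaussianPDFReal (b i) v (x i))) * h x
        = ∏ i, ENNReal.ofReal (gaussianPDFReal (a i) v (x i)) := by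
    intro x
    rw [hh_def]
    simp only
    rw [Real.exp_sum, ENNReal.ofReal_prod_of_nonneg (fun i _ => (Real.exp_pos _).le),
      ← Finset.prod_mul_distrib]
    refine Finset.prod_congr rfl fun i _ => ?_
    rw [← ENNReal.ofReal_mul (gaussianPDFReal_nonneg _ _ _)]
    congr 1
    have hkey := gaussianPDFReal_mul_exp (a i) (b i) hvpos 1 (x i)
    simpa using hkey
  have hPQ : P = Q.withDensity h := by
    rw [hP_def, hQ_def, hdens a, hdens b, ← withDensity_mul _ hGmeas hhmeas]
    congr 1
    funext x
    exact (hGh x).symm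
  have hac : P ≪ Q := hPQ ▸ withDensity_absolutelyContinuous Q h
  have hrn : P.rnDeriv Q =ᵐ[Q] h := by
    rw [hPQ]; exact Measure.rnDeriv_withDensity Q hhmeas
  -- the Rényi integral
  have hmeas1 : ∀ i : Fin d, Measurable (fun y : ℝ =>
      ENNReal.ofReal (gaussianPDFReal (b i) v y *
        Real.exp (α * (((y - b i) ^ 2 - (y - a i) ^ 2) / (2 * (v : ℝ)))))) :=
    fun i => ((measurable_gaussianPDFReal _ _).mul
      (Real.measurable_exp.comp (by fun_prop))).ennreal_ofReal
  have hint : ∫⁻ x, P.rnDeriv Q x ^ α ∂Q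
      = ENNReal.ofReal (Real.exp (α * (α - 1) *
          (∑ i, (a i - b i) ^ 2) / (2 * (v : ℝ)))) := by
    have h1 : ∫⁻ x, P.rnDeriv Q x ^ α ∂Q = ∫⁻ x, h x ^ α ∂Q :=
      lintegral_congr_ae (hrn.mono fun x hx => by simp only [hx])
    have hhα : Measurable fun x => h x ^ α :=
      ENNReal.continuous_rpow_const.measurable.comp hhmeas
    have h2 : ∫⁻ x, h x ^ α ∂Q
        = ∫⁻ x, ∏ i, ENNReal.ofReal (gaussianPDFReal (b i) v (x i) *
            Real.exp (α * (((x i - b i) ^ 2 - (x i - a i) ^ 2) / (2 * (v : ℝ)))))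
          ∂(Measure.pi fun _ : Fin d => (volume : Measure ℝ)) := by
      rw [hQ_def, hdens b, lintegral_withDensity_eq_lintegral_mul _ hGmeas hhα]
      refine lintegral_congr fun x => ?_
      show (∏ i, ENNReal.ofReal (gaussianPDFReal (b i) v (x i))) * h x ^ α = _
      rw [hh_def]
      simp only
      rw [ENNReal.ofReal_rpow_of_pos (Real.exp_pos _), ← Real.exp_mul, Finset.sum_mul,
        Real.exp_sum, ENNReal.ofReal_prod_of_nonneg (fun i _ => (Real.exp_pos _).le),
        ← Finset.prod_mul_distrib]
      refine Finset.prod_congr rfl fun i _ => ?_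
      rw [← ENNReal.ofReal_mul (gaussianPDFReal_nonneg _ _ _)]
      congr 2
      ring
    rw [h1, h2, lintegral_pi_prod _ _ hmeas1]
    simp_rw [gauss_key _ _ hvpos α]
    rw [← ENNReal.ofReal_prod_of_nonneg (fun i _ => (Real.exp_pos _).le),
      ← Real.exp_sum]
    congr 2
    rw [Finset.mul_sum, Finset.sum_div]
  -- conclude
  rw [hMD, hMD']
  simp only [renyiDiv, if_pos hac]
  rw [hint, ENNReal.log_ofReal_of_pos (Real.exp_pos _), Real.log_exp, ← EReal.coe_mul,
    EReal.coe_le_coe_iff]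
  have hS : (∑ i, (a i - b i) ^ 2) ≤ Δ ^ 2 := by
    have hs := hsens D D' hadj
    have hnn : (0:ℝ) ≤ ∑ i, (a i - b i) ^ 2 :=
      Finset.sum_nonneg fun i _ => sq_nonneg _
    have hsq := Real.sq_sqrt hnn
    have hnn2 := Real.sqrt_nonneg (∑ i, (a i - b i) ^ 2)
    nlinarith
  have hα1 : (0:ℝ) < α - 1 := by linarith
  have heq : (α - 1)⁻¹ * (α * (α - 1) * (∑ i, (a i - b i) ^ 2) / (2 * (v : ℝ)))
      = α * (∑ i, (a i - b i) ^ 2) / (2 * σ ^ 2) := by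
    rw [hvσ]
    field_simp
  rw [heq]
  gcongr
end

section
/- Let Q be a function from datasets to ℝ with |Q(D) − Q(D')| ≤ Δ for all adjacent datasets D, D', and let ε > 0. Define the Laplace mechanism M(D) to be the probability measure on ℝ with density x ↦ (ε/(2Δ))·exp(−ε·|x − Q(D)|/Δ) with respect to Lebesgue measure. Then each M(D) is a probability measure, and M satisfies ε-differential privacy: for all adjacent D, D' and every measurable S ⊆ ℝ, M(D)(S) ≤ e^ε · M(D')(S). -/
/-!
By the triangle inequality, shifting the centre of a Laplace density with rate `c` by `t` changes
it pointwise by a factor at most `exp (c * |t|)`. Integrating this bound over `S` gives the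
privacy inequality, since the mechanism has rate `ε / Δ` and adjacent centres are at most `Δ` apart.
-/

open MeasureTheory Real

theorem withDensity_ofReal_le_smul {α : Type*} [MeasurableSpace α] {μ : Measure α}
    {f g : α → ℝ} {k : ℝ} (hk : 0 ≤ k) (hfg : ∀ x, f x ≤ k * g x) :
    μ.withDensity (fun x => ENNReal.ofReal (f x)) ≤
      ENNReal.ofReal k • μ.withDensity (fun x => ENNReal.ofReal (g x)) := by
  rw [← withDensity_smul' _ _ ENNReal.ofReal_ne_top]
  refine withDensity_mono (.of_forall fun x => ?_)
  simp only [Pi.smul_apply, smul_eq_mul, ← ENNReal.ofReal_mul hk]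
  exact ENNReal.ofReal_le_ofReal (hfg x)

theorem integral_exp_neg_mul_abs {c : ℝ} (hc : 0 < c) :
    ∫ x : ℝ, exp (-(c * |x|)) = 2 / c := by
  rw [integral_comp_abs (f := fun x => exp (-(c * x))),
    integral_comp_mul_left_Ioi (fun x => exp (-x)) 0 hc, mul_zero, integral_exp_neg_Ioi_zero,
    smul_eq_mul, mul_one, div_eq_mul_inv]

/-- The Laplace density with centre `μ` and rate `c` (the inverse of the usual scale parameter). -/
noncomputable def laplacePDFReal (μ c x : ℝ) : ℝ := c / 2 * exp (-(c * |x - μ|))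

lemma laplacePDFReal_nonneg {c : ℝ} (hc : 0 ≤ c) (μ x : ℝ) : 0 ≤ laplacePDFReal μ c x := by
  unfold laplacePDFReal; positivity

lemma integral_laplacePDFReal {c : ℝ} (hc : 0 < c) (μ : ℝ) : ∫ x, laplacePDFReal μ c x = 1 := by
  simp only [laplacePDFReal]
  rw [integral_const_mul, integral_sub_right_eq_self (fun x => exp (-(c * |x|))),
    integral_exp_neg_mul_abs hc]
  field_simp

noncomputable def laplaceReal (μ c : ℝ) : Measure ℝ :=
  volume.withDensity fun x => ENNReal.ofReal (laplacePDFReal μ c x)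

lemma isProbabilityMeasure_laplaceReal {c : ℝ} (hc : 0 < c) (μ : ℝ) :
    IsProbabilityMeasure (laplaceReal μ c) := by
  have hint := integral_laplacePDFReal hc μ
  constructor
  rw [laplaceReal, withDensity_apply _ .univ, Measure.restrict_univ,
    ← ofReal_integral_eq_lintegral_ofReal (.of_integral_ne_zero (hint ▸ one_ne_zero))
      (.of_forall (laplacePDFReal_nonneg hc.le μ)), hint, ENNReal.ofReal_one]

lemma laplacePDFReal_le_exp_mul {c : ℝ} (hc : 0 ≤ c) (μ μ' x : ℝ) :
    laplacePDFReal μ c x ≤ exp (c * |μ - μ'|) * laplacePDFReal μ' c x := by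
  have htri : |x - μ'| ≤ |x - μ| + |μ - μ'| := abs_sub_le x μ μ'
  unfold laplacePDFReal
  rw [mul_left_comm, ← exp_add]
  gcongr
  linarith [mul_le_mul_of_nonneg_left htri hc]

lemma laplaceReal_le_exp_smul {c : ℝ} (hc : 0 ≤ c) (μ μ' : ℝ) :
    laplaceReal μ c ≤ ENNReal.ofReal (exp (c * |μ - μ'|)) • laplaceReal μ' c :=
  withDensity_ofReal_le_smul (exp_pos _).le (laplacePDFReal_le_exp_mul hc μ μ')

/-- **The Laplace mechanism is ε-differentially private.**
If `|Q(D) − Q(D')| ≤ Δ` for all adjacent datasets and `M(D)` is the measure on `ℝ` with density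
`x ↦ (ε/(2Δ)) exp(−ε |x − Q(D)| / Δ)` with respect to Lebesgue measure, then each `M(D)` is a
probability measure and `M(D)(S) ≤ e^ε · M(D')(S)` for all adjacent `D, D'` and measurable `S`. -/
theorem laplace_mechanism_dp
    {Data : Type*} (adj : Data → Data → Prop)
    (Q : Data → ℝ) (Δ : ℝ) (hΔ : 0 < Δ)
    (hsens : ∀ D D', adj D D' → |Q D - Q D'| ≤ Δ)
    (ε : ℝ) (hε : 0 < ε)
    (M : Data → Measure ℝ)
    (hM : ∀ D, M D = volume.withDensity
      (fun x => ENNReal.ofReal (ε / (2 * Δ) * Real.exp (-(ε * |x - Q D|) / Δ)))) :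
    (∀ D, IsProbabilityMeasure (M D)) ∧
    (∀ D D', adj D D' → ∀ S : Set ℝ, MeasurableSet S →
      M D S ≤ ENNReal.ofReal (Real.exp ε) * M D' S) := by
  have hc : 0 < ε / Δ := div_pos hε hΔ
  have hM_laplace : ∀ D, M D = laplaceReal (Q D) (ε / Δ) := by
    intro D
    rw [hM D, laplaceReal]
    congr 1 with x
    rw [laplacePDFReal, div_div, mul_comm Δ, neg_div, mul_div_right_comm]
  refine ⟨fun D => hM_laplace D ▸ isProbabilityMeasure_laplaceReal hc (Q D),
    fun D D' hadj S _ => ?_⟩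
  have hexp : exp (ε / Δ * |Q D - Q D'|) ≤ exp ε := by
    rw [exp_le_exp, div_mul_eq_mul_div, div_le_iff₀ hΔ]
    exact mul_le_mul_of_nonneg_left (hsens D D' hadj) hε.le
  calc M D S ≤ ENNReal.ofReal (exp (ε / Δ * |Q D - Q D'|)) * M D' S := by
        rw [hM_laplace, hM_laplace]
        exact laplaceReal_le_exp_smul hc.le _ _ S
    _ ≤ ENNReal.ofReal (exp ε) * M D' S := by gcongr
end

section
/- Consider EMA heavy-ball momentum gradient descent on the one-dimensional quadratic loss L(θ) = ½·λθ² with λ > 0: given β ∈ [0, 1) and η > 0, the iteration is m_{t+1} = β·m_t + (1 − β)·λ·θ_t and θ_{t+1} = θ_t − η·m_{t+1}. If λ < (2 + 2β)/(η·(1 − β)), then for every initialization (θ₀, m₀) ∈ ℝ², the iterates satisfy θ_t → 0 and m_t → 0 as t → ∞. -/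
/-!
Eliminating `m` gives `θ (t + 2) = (1 + β - c) θ (t + 1) - β θ (t)` with `c = η (1 - β) λ`, and the
threshold says exactly `0 < c < 2 + 2β`, Jury's condition for both roots of `X² - (1 + β - c) X + β`
to lie in the open unit disc. Factoring the recurrence through one root `r₁` leaves a first-order
recurrence contracting by the other root `r₂`, forced by a term decaying like `r₁ ^ t`; hence
`θ → 0`, and then `m (t + 1) = (θ t - θ (t + 1)) / η → 0`.
-/

open Filter Topology

lemma tendsto_zero_of_le_mul_add {ρ : ℝ} (hρ0 : 0 ≤ ρ) (hρ1 : ρ < 1) {a e : ℕ → ℝ}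
    (ha : ∀ t, 0 ≤ a t) (he : Tendsto e atTop (𝓝 0)) (h : ∀ t, a (t + 1) ≤ ρ * a t + e t) :
    Tendsto a atTop (𝓝 0) := by
  refine tendsto_order.2 ⟨fun c hc => .of_forall fun t => hc.trans_le (ha t), fun ε hε => ?_⟩
  obtain ⟨N, hN⟩ := eventually_atTop.1 <|
    he.eventually (gt_mem_nhds (by nlinarith : 0 < (1 - ρ) * (ε / 2)))
  have decay : ∀ t ≥ N, a t - ε / 2 ≤ ρ ^ (t - N) * (a N - ε / 2) := by
    refine Nat.le_induction (by simp) fun t htN ih => ?_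
    rw [Nat.sub_add_comm htN, pow_succ', mul_assoc]
    nlinarith [h t, hN t htN]
  have hpow : Tendsto (fun t => ρ ^ (t - N) * (a N - ε / 2)) atTop (𝓝 0) := by
    simpa using ((tendsto_pow_atTop_nhds_zero_of_lt_one hρ0 hρ1).comp
      (tendsto_sub_atTop_nat N)).mul_const (a N - ε / 2)
  filter_upwards [eventually_ge_atTop N, hpow.eventually (gt_mem_nhds (half_pos hε))]
    with t htN hsmall
  linarith [decay t htN]

section SecondOrder

variable {𝕜 E : Type*} [NormedField 𝕜] [NormedAddCommGroup E] [NormedSpace 𝕜 E]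

lemma tendsto_zero_of_eq_add_smul_sub_smul {r₁ r₂ : 𝕜} (h₁ : ‖r₁‖ < 1) (h₂ : ‖r₂‖ < 1)
    {z : ℕ → E} (hz : ∀ t, z (t + 2) = (r₁ + r₂) • z (t + 1) - (r₁ * r₂) • z t) :
    Tendsto z atTop (𝓝 0) := by
  set u : ℕ → E := fun t => z (t + 1) - r₂ • z t with hu
  have hu_pow : ∀ t, u t = r₁ ^ t • u 0 := by
    intro t
    induction t with
    | zero => simp
    | succ t ih =>
      rw [pow_succ', mul_smul, ← ih]
      simp only [hu, hz, smul_sub, add_smul, mul_smul]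
      abel
  have hu_lim : Tendsto u atTop (𝓝 0) := by
    simpa [← hu_pow] using (tendsto_pow_atTop_nhds_zero_of_norm_lt_one h₁).smul_const (u 0)
  refine tendsto_zero_iff_norm_tendsto_zero.2 <|
    tendsto_zero_of_le_mul_add (norm_nonneg r₂) h₂ (fun t => norm_nonneg _)
      (tendsto_zero_iff_norm_tendsto_zero.1 hu_lim) fun t => ?_
  calc ‖z (t + 1)‖ = ‖r₂ • z t + u t‖ := by simp [hu]
    _ ≤ ‖r₂‖ * ‖z t‖ + ‖u t‖ := (norm_add_le _ _).trans_eq (by rw [norm_smul])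

end SecondOrder

lemma abs_lt_one_of_sq_sub_mul_add_eq_zero {T b x : ℝ} (hb : b < 1) (hT : |T| < 1 + b)
    (hx : x ^ 2 - T * x + b = 0) : |x| < 1 := by
  rw [abs_lt] at hT ⊢
  constructor <;> nlinarith

/-- Jury's stability criterion for the real quadratic `X² - T X + b`. -/
lemma exists_roots_norm_lt_one {T b : ℝ} (hb : b < 1) (hT : |T| < 1 + b) :
    ∃ r₁ r₂ : ℂ, r₁ + r₂ = T ∧ r₁ * r₂ = b ∧ ‖r₁‖ < 1 ∧ ‖r₂‖ < 1 := by
  rcases le_or_gt (4 * b) (T ^ 2) with hD | hD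
  · set s := √(T ^ 2 - 4 * b)
    have hs : s ^ 2 = T ^ 2 - 4 * b := Real.sq_sqrt (by linarith)
    refine ⟨((T + s) / 2 : ℝ), ((T - s) / 2 : ℝ), by push_cast; ring, ?_, ?_, ?_⟩
    · exact_mod_cast (by linear_combination (-1 / 4 : ℝ) * hs : (T + s) / 2 * ((T - s) / 2) = b)
    all_goals
      rw [Complex.norm_real, Real.norm_eq_abs]
      exact abs_lt_one_of_sq_sub_mul_add_eq_zero hb hT (by linear_combination (1 / 4 : ℝ) * hs)
  · set r : ℂ := ⟨T / 2, √(4 * b - T ^ 2) / 2⟩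
    have hr : Complex.normSq r = b := by
      simp only [r, Complex.normSq_mk]
      nlinarith [Real.sq_sqrt (by linarith : 0 ≤ 4 * b - T ^ 2)]
    have hr_norm : ‖r‖ < 1 := by
      nlinarith [Complex.sq_norm r, norm_nonneg r]
    refine ⟨r, starRingEnd ℂ r, ?_, by rw [Complex.mul_conj, hr], hr_norm,
      by rwa [Complex.norm_conj]⟩
    rw [Complex.add_conj]
    simp only [r]
    push_cast
    ring

lemma ema_momentum_theta_recurrence {lam β η : ℝ} {θ m : ℕ → ℝ}
    (hm : ∀ t, m (t + 1) = β * m t + (1 - β) * (lam * θ t))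
    (hθ : ∀ t, θ (t + 1) = θ t - η * m (t + 1)) (t : ℕ) :
    θ (t + 2) = (1 + β - η * (1 - β) * lam) * θ (t + 1) - β * θ t := by
  linear_combination hθ (t + 1) - η * hm (t + 1) - β * hθ t

theorem ema_momentum_gd_converges_general
    (lam β η : ℝ) (hlam : 0 < lam) (hβ1 : β < 1) (hη : 0 < η)
    (hthresh : lam < (2 + 2 * β) / (η * (1 - β)))
    (θ m : ℕ → ℝ)
    (hm : ∀ t, m (t + 1) = β * m t + (1 - β) * (lam * θ t))
    (hθ : ∀ t, θ (t + 1) = θ t - η * m (t + 1)) :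
    Tendsto θ atTop (nhds 0) ∧ Tendsto m atTop (nhds 0) := by
  have hden : 0 < η * (1 - β) := mul_pos hη (sub_pos.2 hβ1)
  have hc : 0 < η * (1 - β) * lam := mul_pos hden hlam
  have hc' : η * (1 - β) * lam < 2 + 2 * β := by
    rw [lt_div_iff₀ hden] at hthresh; linarith
  obtain ⟨r₁, r₂, hsum, hprod, h₁, h₂⟩ :=
    exists_roots_norm_lt_one (T := 1 + β - η * (1 - β) * lam) hβ1
      (abs_lt.2 ⟨by linarith, by linarith⟩)
  have hθ_lim : Tendsto θ atTop (𝓝 0) := by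
    have hz := tendsto_zero_of_eq_add_smul_sub_smul h₁ h₂ (z := fun t => (θ t : ℂ)) fun t => by
      simp only [smul_eq_mul, hsum, hprod, ema_momentum_theta_recurrence hm hθ t]
      push_cast; ring
    simpa [Function.comp_def] using (Complex.continuous_re.tendsto 0).comp hz
  refine ⟨hθ_lim, (tendsto_add_atTop_iff_nat 1).1 ?_⟩
  have hm_eq : ∀ t, m (t + 1) = (θ t - θ (t + 1)) / η := fun t => by
    rw [hθ t]; field_simp; ring
  simpa [hm_eq] using ((hθ_lim.sub (hθ_lim.comp (tendsto_add_atTop_nat 1))).div_const η)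

/-- **Stability of EMA heavy-ball momentum below the threshold `(2 + 2β)/(η(1 − β))`.**
For the loss `L(θ) = ½ λ θ²` with `λ > 0`, the iteration
`m_{t+1} = β m_t + (1 − β) λ θ_t`, `θ_{t+1} = θ_t − η m_{t+1}` converges to `(0, 0)` from every
initialization whenever `λ < (2 + 2β)/(η(1 − β))`. -/
theorem ema_momentum_gd_converges
    (lam β η : ℝ) (hlam : 0 < lam) (hβ0 : 0 ≤ β) (hβ1 : β < 1) (hη : 0 < η)
    (hthresh : lam < (2 + 2 * β) / (η * (1 - β)))
    (θ m : ℕ → ℝ)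
    (hm : ∀ t, m (t + 1) = β * m t + (1 - β) * (lam * θ t))
    (hθ : ∀ t, θ (t + 1) = θ t - η * m (t + 1)) :
    Tendsto θ atTop (nhds 0) ∧ Tendsto m atTop (nhds 0) :=
  ema_momentum_gd_converges_general lam β η hlam hβ1 hη hthresh θ m hm hθ
end

section
/- Consider EMA heavy-ball momentum gradient descent on the one-dimensional quadratic loss L(θ) = ½·λθ² with λ > 0: given β ∈ [0, 1) and η > 0, the iteration is m_{t+1} = β·m_t + (1 − β)·λ·θ_t and θ_{t+1} = θ_t − η·m_{t+1}. If λ > (2 + 2β)/(η·(1 − β)), then the iteration is unstable: there exists an initialization (θ₀, m₀) ∈ ℝ² such that ‖(θ_t, m_t)‖ → ∞ as t → ∞. -/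
open Filter

/-- **Instability of EMA heavy-ball momentum above the threshold `(2 + 2β)/(η(1 − β))`.**
For the loss `L(θ) = ½ λ θ²` with `λ > 0`, if `λ > (2 + 2β)/(η(1 − β))` then the iteration
`m_{t+1} = β m_t + (1 − β) λ θ_t`, `θ_{t+1} = θ_t − η m_{t+1}` is unstable: there is an
initialization `(θ₀, m₀)` from which `‖(θ_t, m_t)‖ → ∞`. -/
theorem ema_momentum_gd_diverges
    (lam β η : ℝ) (hlam : 0 < lam) (hβ0 : 0 ≤ β) (hβ1 : β < 1) (hη : 0 < η)
    (hthresh : (2 + 2 * β) / (η * (1 - β)) < lam) :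
    ∃ θ₀ m₀ : ℝ, ∀ θ m : ℕ → ℝ, θ 0 = θ₀ → m 0 = m₀ →
      (∀ t, m (t + 1) = β * m t + (1 - β) * (lam * θ t)) →
      (∀ t, θ (t + 1) = θ t - η * m (t + 1)) →
      Tendsto (fun t => ‖(θ t, m t)‖) atTop atTop := by
  have hβ1' : 0 < 1 - β := by linarith
  have hden : 0 < η * (1 - β) := by positivity
  have hc : 2 + 2 * β < η * (1 - β) * lam := by
    have := (div_lt_iff₀ hden).mp hthresh
    linarith [this]
  set T : ℝ := 1 + β - η * lam * (1 - β) with hT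
  have hTβ : 1 + T + β < 0 := by
    have : η * (1 - β) * lam = η * lam * (1 - β) := by ring
    rw [hT]; nlinarith [hc]
  have hdisc : 0 ≤ T ^ 2 - 4 * β := by nlinarith [sq_nonneg (T + 2), sq_nonneg (1 - β)]
  set s : ℝ := Real.sqrt (T ^ 2 - 4 * β) with hs
  have hs0 : 0 ≤ s := Real.sqrt_nonneg _
  have hs2 : s ^ 2 = T ^ 2 - 4 * β := Real.sq_sqrt hdisc
  set μ : ℝ := (T - s) / 2 with hμ
  have hroot : μ ^ 2 - T * μ + β = 0 := by
    rw [hμ]; field_simp; nlinarith [hs2]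
  have hμlt : μ < -1 := by
    have hsT : T + 2 < s := by nlinarith [hs2, hs0]
    rw [hμ]; linarith
  refine ⟨μ - β, (1 - β) * lam, ?_⟩
  intro θ m hθ0 hm0 hm hθ
  have key : ∀ t, θ t = μ ^ t * (μ - β) ∧ m t = μ ^ t * ((1 - β) * lam) := by
    intro t
    induction t with
    | zero => simp [hθ0, hm0]
    | succ n ih =>
      obtain ⟨h1, h2⟩ := ih
      have hm' : m (n + 1) = μ ^ (n + 1) * ((1 - β) * lam) := by
        rw [hm n, h1, h2]; ring
      constructor
      · rw [hθ n, hm', h1]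
        have hq : μ - β - η * (μ * ((1 - β) * lam)) = μ * (μ - β) := by
          have : η * lam * (1 - β) = 1 + β - T := by rw [hT]; ring
          nlinarith [hroot, this]
        calc μ ^ n * (μ - β) - η * (μ ^ (n + 1) * ((1 - β) * lam))
            = μ ^ n * (μ - β - η * (μ * ((1 - β) * lam))) := by ring
          _ = μ ^ (n + 1) * (μ - β) := by rw [hq]; ring
      · exact hm'
  have hμabs : 1 < |μ| := by rw [abs_of_neg (by linarith : μ < 0)]; linarith
  have hconst : 0 < (1 - β) * lam := by positivity
  have htend : Tendsto (fun t : ℕ => |μ| ^ t * ((1 - β) * lam)) atTop atTop :=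
    (tendsto_pow_atTop_atTop_of_one_lt hμabs).atTop_mul_const hconst
  apply tendsto_atTop_mono _ htend
  intro t
  have h2 := (key t).2
  calc |μ| ^ t * ((1 - β) * lam) = |m t| := by
        rw [h2, abs_mul, abs_pow, abs_of_pos hconst]
    _ ≤ ‖(θ t, m t)‖ := by
        have := norm_snd_le (θ t, m t)
        simpa using this
end
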